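/- arXiv:2509.03967 — 3 statements merged into one kernel-verified Lean document; each statement's English description precedes it below -/
import Mathlib

section
/- For all integers η, k, l ≥ 2, the generalized windmill graph of Type II satisfies Z_0(W''(η,k,l)) = min{η(k−1) + l, ηk}, where Z_0 = Z_+ is the positive semidefinite zero forcing number. -/
namespace ZqForcing

variable {V : Type*}

/-- `u` forces `v` within the allowed vertex set `A`, given the filled set `F`:
`u` is filled, `v` is its unique unfilled neighbor inside `A`. -/
def forceIn (G : SimpleGraph V) (A F : Set V) (u v : V) : Prop :=
  u ∈ A ∧ v ∈ A ∧ u ∈ F ∧ v ∉ F ∧ G.Adj u v ∧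
    ∀ w ∈ A, G.Adj u w → w ∉ F → w = v

/-- One step of the standard zero forcing color change rule. -/
def zfStep (G : SimpleGraph V) (F F' : Set V) : Prop :=
  ∃ u v, forceIn G Set.univ F u v ∧ F' = insert v F

/-- `S` is a zero forcing set: repeated color changes fill all of `V`. -/
def IsZeroForcingSet (G : SimpleGraph V) (S : Set V) : Prop :=
  Relation.ReflTransGen (zfStep G) S Set.univ

/-- The zero forcing number `Z(G)`. -/
noncomputable def zeroForcingNumber (G : SimpleGraph V) : ℕ :=
  sInf {n | ∃ S : Set V, S.ncard = n ∧ IsZeroForcingSet G S}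

/-- Reachability in `G - F`, i.e. through vertices avoiding `F`. -/
def reachAvoid (G : SimpleGraph V) (F : Set V) : V → V → Prop :=
  Relation.ReflTransGen (fun a b => G.Adj a b ∧ a ∉ F ∧ b ∉ F)

/-- The positive semidefinite color change rule: filled `u` forces unfilled `v` when `v`
is the unique neighbor of `u` in the connected component of `G - F` containing `v`. -/
def psdForce (G : SimpleGraph V) (F : Set V) (u v : V) : Prop :=
  u ∈ F ∧ v ∉ F ∧ G.Adj u v ∧
    ∀ w, G.Adj u w → w ∉ F → reachAvoid G F v w → w = v

/-- One step of the positive semidefinite color change rule. -/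
def psdStep (G : SimpleGraph V) (F F' : Set V) : Prop :=
  ∃ u v, psdForce G F u v ∧ F' = insert v F

/-- `S` is a positive semidefinite zero forcing set. -/
def IsPSDForcingSet (G : SimpleGraph V) (S : Set V) : Prop :=
  Relation.ReflTransGen (psdStep G) S Set.univ

/-- The positive semidefinite zero forcing number `Z₊(G)`. -/
noncomputable def psdZeroForcingNumber (G : SimpleGraph V) : ℕ :=
  sInf {n | ∃ S : Set V, S.ncard = n ∧ IsPSDForcingSet G S}

/-- The vertex sets of the connected components of the subgraph induced on
the unfilled vertices. -/
def unfilledComponents (G : SimpleGraph V) (F : Set V) : Set (Set V) :=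
  {C | ∃ v, v ∉ F ∧ C = {w | reachAvoid G F v w}}

/-- A forcing step performed inside the induced subgraph on the vertex set `A`. -/
def rule3Step (G : SimpleGraph V) (A F F' : Set V) : Prop :=
  ∃ u v, forceIn G A F u v ∧ F' = insert v F

/-- `ZqWinFrom G q F t`: starting from the filled set `F`, the player can guarantee to
fill all vertices using at most `t` further tokens against every oracle strategy, in the
`q`-analogue zero forcing game. -/
inductive ZqWinFrom (G : SimpleGraph V) (q : ℕ) : Set V → ℕ → Prop
  | done (t : ℕ) : ZqWinFrom G q Set.univ t
  | rule1 {F : Set V} {t : ℕ} (v : V) (hv : v ∉ F)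
      (h : ZqWinFrom G q (insert v F) t) : ZqWinFrom G q F (t + 1)
  | rule2 {F : Set V} {t : ℕ} (u v : V) (huv : forceIn G Set.univ F u v)
      (h : ZqWinFrom G q (insert v F) t) : ZqWinFrom G q F t
  | rule3 {F : Set V} {t : ℕ} (𝒞 : Set (Set V))
      (h𝒞 : 𝒞 ⊆ unfilledComponents G F) (hcard : q + 1 ≤ 𝒞.ncard)
      (next : ∀ 𝒮 : Set (Set V), 𝒮 ⊆ 𝒞 → 𝒮.Nonempty → Set V)
      (hnext : ∀ (𝒮 : Set (Set V)) (h1 : 𝒮 ⊆ 𝒞) (h2 : 𝒮.Nonempty),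
        Relation.ReflTransGen (rule3Step G (F ∪ ⋃₀ 𝒮)) F (next 𝒮 h1 h2))
      (h : ∀ (𝒮 : Set (Set V)) (h1 : 𝒮 ⊆ 𝒞) (h2 : 𝒮.Nonempty),
        ZqWinFrom G q (next 𝒮 h1 h2) t) :
      ZqWinFrom G q F t

/-- The `q`-analogue zero forcing number `Z_q(G)`. -/
noncomputable def qZeroForcingNumber (G : SimpleGraph V) (q : ℕ) : ℕ :=
  sInf {t | ZqWinFrom G q ∅ t}

/-- The induced subgraph on `B` is connected and has no cut vertex. -/
def NoCutVertex (G : SimpleGraph V) (B : Set V) : Prop :=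
  (G.induce B).Connected ∧
    ∀ v ∈ B, (B \ {v}).Nonempty → (G.induce (B \ {v})).Connected

/-- `B` is a block of `G`: a maximal (vertex set of a) connected subgraph without
a cut vertex. -/
def IsBlock (G : SimpleGraph V) (B : Set V) : Prop :=
  NoCutVertex G B ∧ ∀ B' : Set V, B ⊆ B' → NoCutVertex G B' → B' = B

/-- A block graph: a connected graph each of whose blocks is a clique. -/
def IsBlockGraph (G : SimpleGraph V) : Prop :=
  G.Connected ∧ ∀ B : Set V, IsBlock G B → G.IsClique B

/-- A cactus graph: connected, and every edge lies on at most one cycle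
(cycles being identified when they have the same edge set). -/
def IsCactus (G : SimpleGraph V) : Prop :=
  G.Connected ∧ ∀ (a b : V) (c : G.Walk a a) (d : G.Walk b b),
    c.IsCycle → d.IsCycle → ∀ e ∈ c.edges, e ∈ d.edges →
      ∀ e', e' ∈ c.edges ↔ e' ∈ d.edges

/-- `c` is an induced (chordless) cycle of `G`. -/
def IsInducedCycle (G : SimpleGraph V) {v : V} (c : G.Walk v v) : Prop :=
  c.IsCycle ∧ ∀ x ∈ c.support, ∀ y ∈ c.support, G.Adj x y → s(x, y) ∈ c.edges

/-- Generalized windmill graph of Type I: η disjoint copies of `K_k` together with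
`l` central vertices forming a clique, each central vertex adjacent to everything. -/
def windmillI (η k l : ℕ) : SimpleGraph ((Fin η × Fin k) ⊕ Fin l) :=
  SimpleGraph.fromRel (fun a b =>
    match a, b with
    | Sum.inl (i, _), Sum.inl (i', _) => i = i'
    | Sum.inr _, Sum.inr _ => True
    | _, _ => True)

/-- Generalized windmill graph of Type II: η disjoint copies of `K_k` together with
`l` pairwise nonadjacent central vertices, each adjacent to every clique vertex. -/
def windmillII (η k l : ℕ) : SimpleGraph ((Fin η × Fin k) ⊕ Fin l) :=
  SimpleGraph.fromRel (fun a b =>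
    match a, b with
    | Sum.inl (i, _), Sum.inl (i', _) => i = i'
    | Sum.inr _, Sum.inr _ => False
    | _, _ => True)

/-- Generalized star (spider) graph: a center `none` together with `k` disjoint paths,
the `i`-th of length `m i`, attached to the center at one endpoint. -/
def spider {k : ℕ} (m : Fin k → ℕ) : SimpleGraph (Option (Σ i : Fin k, Fin (m i))) :=
  SimpleGraph.fromRel (fun a b =>
    match a, b with
    | none, some ⟨_, j⟩ => j.val = 0
    | some ⟨i, j⟩, some ⟨i', j'⟩ => i = i' ∧ j.val + 1 = j'.val
    | _, _ => False)


open Sum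
variable {V : Type*}

lemma reachAvoid_mono {G : SimpleGraph V} {F F' : Set V} (h : F ⊆ F') {a b : V}
    (hr : reachAvoid G F' a b) : reachAvoid G F a b := by
  induction hr with
  | refl => exact .refl
  | tail _ hstep ih =>
      exact ih.tail ⟨hstep.1, fun hx => hstep.2.1 (h hx), fun hx => hstep.2.2 (h hx)⟩

lemma reachAvoid_eq_of_isolated {G : SimpleGraph V} {F : Set V} {v w : V}
    (hiso : ∀ x, G.Adj v x → x ∈ F) (h : reachAvoid G F v w) : w = v := by
  rcases Relation.ReflTransGen.cases_head h with h | ⟨c, ⟨hadj, _, hc⟩, _⟩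
  · exact h.symm
  · exact absurd (hiso c hadj) hc

lemma psdForce_of_isolated {G : SimpleGraph V} {F : Set V} {u v : V}
    (hu : u ∈ F) (hv : v ∉ F) (huv : G.Adj u v) (hiso : ∀ x, G.Adj v x → x ∈ F) :
    psdForce G F u v :=
  ⟨hu, hv, huv, fun w _ hw hr => reachAvoid_eq_of_isolated hiso hr⟩

lemma psdForce_mono {G : SimpleGraph V} {F F' : Set V} {u v : V} (hFF : F ⊆ F')
    (hv : v ∉ F') (h : psdForce G F u v) : psdForce G F' u v :=
  ⟨hFF h.1, hv, h.2.2.1, fun w hw hwF' hr =>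
    h.2.2.2 w hw (fun hx => hwF' (hFF hx)) (reachAvoid_mono hFF hr)⟩

lemma psdStep_union {G : SimpleGraph V} {F F' : Set V} (T : Set V) (h : psdStep G F F') :
    Relation.ReflTransGen (psdStep G) (F ∪ T) (F' ∪ T) := by
  obtain ⟨u, v, hf, rfl⟩ := h
  rw [Set.insert_union]
  by_cases hv : v ∈ F ∪ T
  · rw [Set.insert_eq_self.mpr hv]
  · exact Relation.ReflTransGen.single
      ⟨u, v, psdForce_mono Set.subset_union_left hv hf, rfl⟩

lemma psdChain_union {G : SimpleGraph V} {A B : Set V} (T : Set V)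
    (h : Relation.ReflTransGen (psdStep G) A B) :
    Relation.ReflTransGen (psdStep G) (A ∪ T) (B ∪ T) := by
  induction h with
  | refl => exact .refl
  | tail _ hstep ih => exact ih.trans (psdStep_union T hstep)

lemma rule3_chain_to_psd {G : SimpleGraph V} {F C X : Set V}
    (hC : C ∈ unfilledComponents G F)
    (h : Relation.ReflTransGen (rule3Step G (F ∪ C)) F X) :
    Relation.ReflTransGen (psdStep G) F X ∧ F ⊆ X := by
  induction h with
  | refl => exact ⟨.refl, subset_rfl⟩
  | tail _ hstep ih =>
      obtain ⟨u, v, ⟨huA, hvA, huF, hvF, huv, huniq⟩, rfl⟩ := hstep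
      obtain ⟨v₀, hv₀F, hCeq⟩ := hC
      refine ⟨ih.1.tail ⟨u, v, ⟨huF, hvF, huv, ?_⟩, rfl⟩,
        ih.2.trans (Set.subset_insert _ _)⟩
      intro w hw hwF hr
      have hvC : v ∈ C := hvA.resolve_left (fun h' => hvF (ih.2 h'))
      have hrF : reachAvoid G F v w := reachAvoid_mono ih.2 hr
      have hwC : w ∈ C := by
        rw [hCeq] at hvC ⊢
        exact hvC.trans hrF
      exact huniq w (Set.mem_union_right _ hwC) hw hwF

lemma zq_to_psd {G : SimpleGraph V} {q : ℕ} {F : Set V} {t : ℕ} (h : ZqWinFrom G q F t) :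
    ∃ T : Set V, T.ncard ≤ t ∧ Relation.ReflTransGen (psdStep G) (F ∪ T) Set.univ := by
  induction h with
  | done t => exact ⟨∅, by simp, by rw [Set.union_empty]⟩
  | @rule1 Fc tc v hv h ih =>
      obtain ⟨T, hT, hchain⟩ := ih
      refine ⟨insert v T, le_trans (Set.ncard_insert_le _ _) (by omega), ?_⟩
      have he : Fc ∪ insert v T = insert v Fc ∪ T := by
        rw [Set.union_insert, Set.insert_union]
      rw [he]; exact hchain
  | @rule2 Fc tc u v huv h ih =>
      obtain ⟨T, hT, hchain⟩ := ih
      refine ⟨T, hT, ?_⟩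
      by_cases hv : v ∈ Fc ∪ T
      · have he : Fc ∪ T = insert v Fc ∪ T := by
          rw [Set.insert_union, Set.insert_eq_self.mpr hv]
        rw [he]; exact hchain
      · refine Relation.ReflTransGen.head
          ⟨u, v, ⟨Set.mem_union_left _ huv.2.2.1, hv, huv.2.2.2.2.1,
            fun w hw hwFT _ => huv.2.2.2.2.2 w trivial hw
              (fun h' => hwFT (Set.mem_union_left _ h'))⟩, rfl⟩ ?_
        rw [← Set.insert_union]; exact hchain
  | @rule3 Fc tc 𝒞 h𝒞 hcard next hnext h ih =>
      obtain ⟨C, hC⟩ : 𝒞.Nonempty := Set.nonempty_of_ncard_ne_zero (by omega)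
      have h1 : ({C} : Set (Set V)) ⊆ 𝒞 := Set.singleton_subset_iff.mpr hC
      have h2 : ({C} : Set (Set V)).Nonempty := Set.singleton_nonempty _
      obtain ⟨T, hT, hchain⟩ := ih {C} h1 h2
      have hnx := hnext {C} h1 h2
      rw [Set.sUnion_singleton] at hnx
      obtain ⟨hpsd, -⟩ := rule3_chain_to_psd (h𝒞 hC) hnx
      exact ⟨T, hT, (psdChain_union T hpsd).trans hchain⟩

lemma fort_blocks {G : SimpleGraph V} (U S : Set V) (hU : U.Nonempty)
    (hfort : ∀ F : Set V, Disjoint U F → ∀ u v, psdForce G F u v → v ∉ U)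
    (hS : Disjoint U S) : ¬ Relation.ReflTransGen (psdStep G) S Set.univ := by
  intro h
  have key : ∀ X, Relation.ReflTransGen (psdStep G) S X → Disjoint U X := by
    intro X hX
    induction hX with
    | refl => exact hS
    | tail _ hstep ih =>
        obtain ⟨u, v, hf, rfl⟩ := hstep
        rw [Set.insert_eq, Set.disjoint_union_right, Set.disjoint_singleton_right]
        exact ⟨hfort _ ih u v hf, ih⟩
  obtain ⟨x, hx⟩ := hU
  have := key _ h
  rw [Set.disjoint_univ] at this
  exact absurd (this ▸ hx) (Set.notMem_empty x)
lemma compl_insert' {V : Type*} (v : V) (F : Set V) : (insert v F)ᶜ = Fᶜ \ {v} := by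
  ext x; simp only [Set.mem_compl_iff, Set.mem_insert_iff, Set.mem_diff,
    Set.mem_singleton_iff, not_or]; tauto

lemma psd_fill_of_indep [Fintype V] {G : SimpleGraph V} (F : Set V)
    (h : ∀ v ∉ F, (∃ u ∈ F, G.Adj u v) ∧ ∀ x, G.Adj v x → x ∈ F) :
    Relation.ReflTransGen (psdStep G) F Set.univ := by
  generalize hn : Fᶜ.ncard = n
  induction n using Nat.strong_induction_on generalizing F with
  | _ n ih =>
    by_cases hF : F = Set.univ
    · subst hF; exact .refl
    · obtain ⟨v, hv⟩ : ∃ v, v ∉ F := by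
        by_contra hc; push_neg at hc
        exact hF (Set.eq_univ_of_forall hc)
      obtain ⟨⟨u, hu, huv⟩, hiso⟩ := h v hv
      have hstep : psdStep G F (insert v F) :=
        ⟨u, v, psdForce_of_isolated hu hv huv hiso, rfl⟩
      refine Relation.ReflTransGen.head hstep (ih ((insert v F)ᶜ.ncard) ?_ _ ?_ rfl)
      · rw [← hn, compl_insert']
        exact Set.ncard_lt_ncard (Set.sdiff_singleton_ssubset.mpr hv) (Set.toFinite _)
      · intro w hw
        have hwF : w ∉ F := fun h' => hw (Set.mem_insert_of_mem _ h')
        obtain ⟨⟨u', hu', hu'w⟩, hiso'⟩ := h w hwF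
        exact ⟨⟨u', Set.mem_insert_of_mem _ hu', hu'w⟩,
          fun x hx => Set.mem_insert_of_mem _ (hiso' x hx)⟩

lemma ZqWinFrom.mono {G : SimpleGraph V} {q : ℕ} {F : Set V} {t : ℕ}
    (h : ZqWinFrom G q F t) : ZqWinFrom G q F (t + 1) := by
  induction h with
  | done t => exact .done _
  | rule1 v hv _ ih => exact .rule1 v hv ih
  | rule2 u v huv _ ih => exact .rule2 u v huv ih
  | rule3 𝒞 h𝒞 hcard next hnext _ ih => exact .rule3 𝒞 h𝒞 hcard next hnext ih

lemma game_fill {G : SimpleGraph V} {q t : ℕ} (T : Finset V) (F : Set V)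
    (h : ZqWinFrom G q (F ∪ T) t) : ZqWinFrom G q F (t + T.card) := by
  classical
  induction T using Finset.induction generalizing t with
  | empty => simpa using h
  | @insert a T ha ih =>
      have he : F ∪ ((insert a T : Finset V) : Set V) = insert a (F ∪ ↑T) := by
        ext x; simp [or_comm, or_assoc, or_left_comm]
      rw [he] at h
      rw [Finset.card_insert_of_notMem ha]
      by_cases haFT : a ∈ F ∪ ↑T
      · rw [Set.insert_eq_self.mpr haFT] at h
        exact (ih h).mono
      · have := ZqWinFrom.rule1 a haFT h
        have := ih this
        rw [Nat.add_right_comm] at this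
        exact this

lemma game_of_indep [Fintype V] {G : SimpleGraph V} (F : Set V)
    (h : ∀ v ∉ F, (∃ u ∈ F, G.Adj u v) ∧ ∀ x, G.Adj v x → x ∈ F) :
    ZqWinFrom G 0 F 0 := by
  generalize hn : Fᶜ.ncard = n
  induction n using Nat.strong_induction_on generalizing F with
  | _ n ih =>
    by_cases hF : F = Set.univ
    · subst hF; exact .done _
    · obtain ⟨v, hv⟩ : ∃ v, v ∉ F := by
        by_contra hc; push_neg at hc
        exact hF (Set.eq_univ_of_forall hc)
      obtain ⟨⟨u, hu, huv⟩, hiso⟩ := h v hv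
      have hcomp : ({v} : Set V) ∈ unfilledComponents G F := by
        refine ⟨v, hv, ?_⟩
        ext w
        simp only [Set.mem_singleton_iff, Set.mem_setOf_eq]
        constructor
        · rintro rfl; exact .refl
        · intro hr; exact (reachAvoid_eq_of_isolated hiso hr)
      have hsub : ∀ 𝒮 : Set (Set V), 𝒮 ⊆ ({({v} : Set V)} : Set (Set V)) → 𝒮.Nonempty →
          𝒮 = {({v} : Set V)} := by
        intro 𝒮 h1 h2
        rcases Set.subset_singleton_iff_eq.mp h1 with rfl | rfl
        · exact absurd h2 (by simp)
        · rfl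
      refine ZqWinFrom.rule3 {({v} : Set V)} (by simpa using hcomp) (by simp)
        (fun _ _ _ => insert v F) ?_ ?_
      · intro 𝒮 h1 h2
        have h3 := hsub 𝒮 h1 h2
        subst h3
        rw [Set.sUnion_singleton]
        refine Relation.ReflTransGen.single ⟨u, v, ⟨Set.mem_union_left _ hu, ?_, hu, hv, huv, ?_⟩, rfl⟩
        · exact Set.mem_union_right _ rfl
        · rintro w hw hadj hwF
          rcases hw with hw | hw
          · exact absurd hw hwF
          · exact hw
      · intro 𝒮 h1 h2
        refine ih ((insert v F)ᶜ.ncard) ?_ _ ?_ rfl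
        · subst hn; rw [compl_insert']
          exact Set.ncard_lt_ncard (Set.sdiff_singleton_ssubset.mpr hv) (Set.toFinite _)
        · intro w hw
          have hwF : w ∉ F := fun h' => hw (Set.mem_insert_of_mem _ h')
          obtain ⟨⟨u', hu', hu'w⟩, hiso'⟩ := h w hwF
          exact ⟨⟨u', Set.mem_insert_of_mem _ hu', hu'w⟩,
            fun x hx => Set.mem_insert_of_mem _ (hiso' x hx)⟩

lemma adj_inl_inl {i i' : Fin η} {a b : Fin k} :
    (windmillII η k l).Adj (inl (i,a)) (inl (i',b)) ↔ i = i' ∧ a ≠ b := by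
  simp only [windmillII, SimpleGraph.fromRel_adj, ne_eq, inl.injEq, Prod.mk.injEq, not_and]
  constructor
  · rintro ⟨h1, h2 | h2⟩
    · exact ⟨h2, h1 h2⟩
    · exact ⟨h2.symm, h1 h2.symm⟩
  · rintro ⟨rfl, hab⟩
    exact ⟨fun _ => hab, Or.inl rfl⟩

lemma adj_inl_inr {p : Fin η × Fin k} {c : Fin l} :
    (windmillII η k l).Adj (inl p) (inr c) := by
  simp [windmillII, SimpleGraph.fromRel_adj]

lemma adj_inr_inl {p : Fin η × Fin k} {c : Fin l} :
    (windmillII η k l).Adj (inr c) (inl p) := adj_inl_inr.symm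

lemma not_adj_inr_inr {c c' : Fin l} :
    ¬ (windmillII η k l).Adj (inr c) (inr c') := by
  simp [windmillII, SimpleGraph.fromRel_adj]
lemma reach1 {G : SimpleGraph V} {F : Set V} {x y : V} (h : G.Adj x y) (hx : x ∉ F)
    (hy : y ∉ F) : reachAvoid G F x y := Relation.ReflTransGen.single ⟨h, hx, hy⟩

lemma reach2 {G : SimpleGraph V} {F : Set V} {x y z : V} (h1 : G.Adj x y) (h2 : G.Adj y z)
    (hx : x ∉ F) (hy : y ∉ F) (hz : z ∉ F) : reachAvoid G F x z :=
  (reach1 h1 hx hy).tail ⟨h2, hy, hz⟩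

lemma adj_retarget {η k l : ℕ} {u : (Fin η × Fin k) ⊕ Fin l} {i : Fin η} {a b : Fin k}
    (h : (windmillII η k l).Adj u (inl (i,a))) (hne : u ≠ inl (i,b)) :
    (windmillII η k l).Adj u (inl (i,b)) := by
  cases u with
  | inl q =>
      obtain ⟨i₂, z⟩ := q
      rw [adj_inl_inl] at h ⊢
      obtain ⟨rfl, -⟩ := h
      exact ⟨rfl, fun hzb => hne (by rw [hzb])⟩
  | inr c => exact adj_inr_inl

section Forts
variable {η k l : ℕ}

lemma fortI (i : Fin η) {a b : Fin k} (hab : a ≠ b) (F : Set ((Fin η × Fin k) ⊕ Fin l))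
    (hdis : Disjoint ({inl (i,a), inl (i,b)} : Set ((Fin η × Fin k) ⊕ Fin l)) F)
    (u v : (Fin η × Fin k) ⊕ Fin l) (h : psdForce (windmillII η k l) F u v) :
    v ∉ ({inl (i,a), inl (i,b)} : Set ((Fin η × Fin k) ⊕ Fin l)) := by
  obtain ⟨huF, hvF, huv, huniq⟩ := h
  have hmem : ∀ x ∈ ({inl (i,a), inl (i,b)} : Set ((Fin η × Fin k) ⊕ Fin l)), x ∉ F :=
    fun x hx => Set.disjoint_left.mp hdis hx
  have haF : (inl (i,a) : (Fin η × Fin k) ⊕ Fin l) ∉ F := hmem _ (by simp)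
  have hbF : (inl (i,b) : (Fin η × Fin k) ⊕ Fin l) ∉ F := hmem _ (by simp)
  intro hvU
  rcases hvU with rfl | rfl
  · have hadj := adj_retarget (b := b) huv (fun he => hbF (he ▸ huF))
    have := huniq _ hadj hbF
      (reach1 (adj_inl_inl.mpr ⟨rfl, hab⟩) haF hbF)
    simp only [inl.injEq, Prod.mk.injEq] at this
    exact hab this.2.symm
  · have hadj := adj_retarget (b := a) huv (fun he => haF (he ▸ huF))
    have := huniq _ hadj haF
      (reach1 (adj_inl_inl.mpr ⟨rfl, hab.symm⟩) hbF haF)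
    simp only [inl.injEq, Prod.mk.injEq] at this
    exact hab this.2

lemma fortII {c c' : Fin l} (hcc : c ≠ c') {p p' : Fin η × Fin k} (hpp : p ≠ p')
    (F : Set ((Fin η × Fin k) ⊕ Fin l))
    (hdis : Disjoint ({inr c, inr c', inl p, inl p'} : Set ((Fin η × Fin k) ⊕ Fin l)) F)
    (u v : (Fin η × Fin k) ⊕ Fin l) (h : psdForce (windmillII η k l) F u v) :
    v ∉ ({inr c, inr c', inl p, inl p'} : Set ((Fin η × Fin k) ⊕ Fin l)) := by
  obtain ⟨huF, hvF, huv, huniq⟩ := h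
  have hmem : ∀ x ∈ ({inr c, inr c', inl p, inl p'} : Set ((Fin η × Fin k) ⊕ Fin l)), x ∉ F :=
    fun x hx => Set.disjoint_left.mp hdis hx
  have hcF := hmem (inr c) (by simp)
  have hc'F := hmem (inr c') (by simp)
  have hpF := hmem (inl p) (by simp)
  have hp'F := hmem (inl p') (by simp)
  intro hvU
  rcases hvU with rfl | rfl | rfl | rfl
  · cases u with
    | inr d => exact not_adj_inr_inr huv
    | inl q =>
        have := huniq _ (adj_inl_inr (c := c')) hc'F
          (reach2 adj_inr_inl adj_inl_inr hcF hpF hc'F)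
        simp only [inr.injEq] at this
        exact hcc this.symm
  · cases u with
    | inr d => exact not_adj_inr_inr huv
    | inl q =>
        have := huniq _ (adj_inl_inr (c := c)) hcF
          (reach2 adj_inr_inl adj_inl_inr hc'F hpF hcF)
        simp only [inr.injEq] at this
        exact hcc this
  · cases u with
    | inr d =>
        have := huniq _ (adj_inr_inl (p := p')) hp'F
          (reach2 adj_inl_inr adj_inr_inl hpF hcF hp'F)
        simp only [inl.injEq] at this
        exact hpp this.symm
    | inl q =>
        have := huniq _ (adj_inl_inr (c := c)) hcF
          (reach1 adj_inl_inr hpF hcF)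
        exact absurd this (by simp)
  · cases u with
    | inr d =>
        have := huniq _ (adj_inr_inl (p := p)) hpF
          (reach2 adj_inl_inr adj_inr_inl hp'F hcF hpF)
        simp only [inl.injEq] at this
        exact hpp this
    | inl q =>
        have := huniq _ (adj_inl_inr (c := c)) hcF
          (reach1 adj_inl_inr hp'F hcF)
        exact absurd this (by simp)

lemma fortIII (hη : 2 ≤ η) (c : Fin l) (f : Fin η → Fin k)
    (F : Set ((Fin η × Fin k) ⊕ Fin l))
    (hdis : Disjoint
      (insert (inr c) (Set.range fun i => (inl (i, f i) : (Fin η × Fin k) ⊕ Fin l))) F)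
    (u v : (Fin η × Fin k) ⊕ Fin l) (h : psdForce (windmillII η k l) F u v) :
    v ∉ insert (inr c) (Set.range fun i => (inl (i, f i) : (Fin η × Fin k) ⊕ Fin l)) := by
  obtain ⟨huF, hvF, huv, huniq⟩ := h
  have hmem : ∀ x ∈ insert (inr c)
      (Set.range fun i => (inl (i, f i) : (Fin η × Fin k) ⊕ Fin l)), x ∉ F :=
    fun x hx => Set.disjoint_left.mp hdis hx
  have hcF := hmem (inr c) (Set.mem_insert _ _)
  have hiF : ∀ i : Fin η, (inl (i, f i) : (Fin η × Fin k) ⊕ Fin l) ∉ F :=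
    fun i => hmem _ (Set.mem_insert_of_mem _ ⟨i, rfl⟩)
  intro hvU
  rcases hvU with rfl | ⟨i, rfl⟩
  · cases u with
    | inr d => exact not_adj_inr_inr huv
    | inl q =>
        obtain ⟨i₂, z⟩ := q
        have hzf : z ≠ f i₂ := fun he => hiF i₂ (by rw [← he]; exact huF)
        have := huniq _ (adj_inl_inl.mpr ⟨rfl, hzf⟩) (hiF i₂)
          (reach1 adj_inr_inl hcF (hiF i₂))
        exact absurd this (by simp)
  · cases u with
    | inl q =>
        obtain ⟨i₂, z⟩ := q
        have := huniq _ (adj_inl_inr (c := c)) hcF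
          (reach1 adj_inl_inr (hiF i) hcF)
        exact absurd this (by simp)
    | inr d =>
        obtain ⟨i', hi'⟩ : ∃ i' : Fin η, i' ≠ i := by
          refine ⟨if i = ⟨0, by omega⟩ then ⟨1, by omega⟩ else ⟨0, by omega⟩, ?_⟩
          split <;> rename_i hsplit <;> simp_all [Fin.ext_iff] <;> omega
        have := huniq _ (adj_inr_inl (p := (i', f i'))) (hiF i')
          (reach2 adj_inl_inr adj_inr_inl (hiF i) hcF (hiF i'))
        simp only [inl.injEq, Prod.mk.injEq] at this
        exact hi' this.1

lemma fortIV (hl : 2 ≤ l) (p : Fin η × Fin k)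
    (F : Set ((Fin η × Fin k) ⊕ Fin l))
    (hdis : Disjoint
      (insert (inl p) (Set.range (inr : Fin l → (Fin η × Fin k) ⊕ Fin l))) F)
    (u v : (Fin η × Fin k) ⊕ Fin l) (h : psdForce (windmillII η k l) F u v) :
    v ∉ insert (inl p) (Set.range (inr : Fin l → (Fin η × Fin k) ⊕ Fin l)) := by
  obtain ⟨huF, hvF, huv, huniq⟩ := h
  have hmem : ∀ x ∈ insert (inl p)
      (Set.range (inr : Fin l → (Fin η × Fin k) ⊕ Fin l)), x ∉ F :=
    fun x hx => Set.disjoint_left.mp hdis hx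
  have hpF := hmem (inl p) (Set.mem_insert _ _)
  have hcF : ∀ c : Fin l, (inr c : (Fin η × Fin k) ⊕ Fin l) ∉ F :=
    fun c => hmem _ (Set.mem_insert_of_mem _ ⟨c, rfl⟩)
  intro hvU
  rcases hvU with rfl | ⟨c, rfl⟩
  · cases u with
    | inr d => exact hcF d huF
    | inl q =>
        have c0 : Fin l := ⟨0, by omega⟩
        have := huniq (inr ⟨0, by omega⟩) adj_inl_inr (hcF _)
          (reach1 adj_inl_inr hpF (hcF _))
        exact absurd this (by simp)
  · cases u with
    | inr d => exact not_adj_inr_inr huv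
    | inl q =>
        obtain ⟨c', hc'⟩ : ∃ c' : Fin l, c' ≠ c := by
          refine ⟨if c = ⟨0, by omega⟩ then ⟨1, by omega⟩ else ⟨0, by omega⟩, ?_⟩
          split <;> rename_i hsplit <;> simp_all [Fin.ext_iff] <;> omega
        have := huniq _ (adj_inl_inr (c := c')) (hcF c')
          (reach2 adj_inr_inl adj_inl_inr (hcF c) hpF (hcF c'))
        simp only [inr.injEq] at this
        exact hc' this

end Forts
section Windmill
variable {η k l : ℕ}

lemma indep_S1 {z0 z1 : Fin k} (hz : z1 ≠ z0) :
    ∀ v ∉ (Set.range fun i : Fin η => (inl (i, z0) : (Fin η × Fin k) ⊕ Fin l))ᶜ,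
      (∃ u ∈ (Set.range fun i : Fin η => (inl (i, z0) : (Fin η × Fin k) ⊕ Fin l))ᶜ,
        (windmillII η k l).Adj u v) ∧
      ∀ x, (windmillII η k l).Adj v x →
        x ∈ (Set.range fun i : Fin η => (inl (i, z0) : (Fin η × Fin k) ⊕ Fin l))ᶜ := by
  intro v hv
  rw [Set.notMem_compl_iff] at hv
  obtain ⟨i, rfl⟩ := hv
  constructor
  · refine ⟨inl (i, z1), ?_, adj_inl_inl.mpr ⟨rfl, hz⟩⟩
    simp only [Set.mem_compl_iff, Set.mem_range, not_exists]
    intro j he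
    simp only [inl.injEq, Prod.mk.injEq] at he
    exact hz he.2.symm
  · intro x hadj
    cases x with
    | inr c => simp
    | inl q =>
        obtain ⟨i₂, z⟩ := q
        rw [adj_inl_inl] at hadj
        simp only [Set.mem_compl_iff, Set.mem_range, not_exists]
        intro j he
        simp only [inl.injEq, Prod.mk.injEq] at he
        exact hadj.2 he.2

lemma indep_S2 (i0 : Fin η) (z0 : Fin k) :
    ∀ v ∉ (Set.range (inl : Fin η × Fin k → (Fin η × Fin k) ⊕ Fin l)),
      (∃ u ∈ (Set.range (inl : Fin η × Fin k → (Fin η × Fin k) ⊕ Fin l)),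
        (windmillII η k l).Adj u v) ∧
      ∀ x, (windmillII η k l).Adj v x →
        x ∈ (Set.range (inl : Fin η × Fin k → (Fin η × Fin k) ⊕ Fin l)) := by
  intro v hv
  cases v with
  | inl p => exact absurd ⟨p, rfl⟩ hv
  | inr c =>
      refine ⟨⟨inl (i0, z0), ⟨_, rfl⟩, adj_inl_inr⟩, ?_⟩
      intro x hadj
      cases x with
      | inl p => exact ⟨p, rfl⟩
      | inr c' => exact absurd hadj not_adj_inr_inr

lemma ncard_S1 (hk : 1 ≤ k) {z0 : Fin k} :
    (Set.range fun i : Fin η => (inl (i, z0) : (Fin η × Fin k) ⊕ Fin l))ᶜ.ncard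
      = η * (k - 1) + l := by
  have hinj : Function.Injective fun i : Fin η => (inl (i, z0) : (Fin η × Fin k) ⊕ Fin l) := by
    intro a b he
    simpa using he
  have h1 : (Set.range fun i : Fin η => (inl (i, z0) : (Fin η × Fin k) ⊕ Fin l)).ncard = η := by
    rw [← Set.image_univ, Set.ncard_image_of_injective _ hinj, Set.ncard_univ]
    simp
  have h2 := Set.ncard_add_ncard_compl
    (Set.range fun i : Fin η => (inl (i, z0) : (Fin η × Fin k) ⊕ Fin l))
  have h3 : Nat.card ((Fin η × Fin k) ⊕ Fin l) = η * k + l := by simp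
  have hmul : η * k = η * (k - 1) + η := by
    conv_lhs => rw [show k = (k - 1) + 1 by omega]
    ring
  omega

lemma ncard_S2 :
    (Set.range (inl : Fin η × Fin k → (Fin η × Fin k) ⊕ Fin l)).ncard = η * k := by
  rw [← Set.image_univ, Set.ncard_image_of_injective _ Sum.inl_injective, Set.ncard_univ]
  simp

lemma psd_lower (hη : 2 ≤ η) (hk : 2 ≤ k) (hl : 2 ≤ l)
    (S : Set ((Fin η × Fin k) ⊕ Fin l))
    (hS : Relation.ReflTransGen (psdStep (windmillII η k l)) S Set.univ) :
    min (η * (k - 1) + l) (η * k) ≤ S.ncard := by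
  by_contra hlt
  push_neg at hlt
  set A : Set (Fin η × Fin k) := {p | inl p ∈ Sᶜ} with hA
  set B : Set (Fin l) := {c | inr c ∈ Sᶜ} with hB
  have hAS : ∀ p ∈ A, inl p ∈ Sᶜ := fun p hp => hp
  have hBS : ∀ c ∈ B, inr c ∈ Sᶜ := fun c hc => hc
  have hsplit : Sᶜ = (inl '' A) ∪ (inr '' B) := by
    ext x; cases x <;> simp [hA, hB]
  have hdisim : Disjoint (inl '' A) (inr '' B) := by
    rw [Set.disjoint_left]
    rintro x ⟨p, -, rfl⟩ ⟨c, -, hcx⟩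
    simp at hcx
  have hcardsplit : Sᶜ.ncard = A.ncard + B.ncard := by
    rw [hsplit, Set.ncard_union_eq hdisim (Set.toFinite _) (Set.toFinite _),
      Set.ncard_image_of_injective _ Sum.inl_injective,
      Set.ncard_image_of_injective _ Sum.inr_injective]
  have hmul : η * k = η * (k - 1) + η := by
    conv_lhs => rw [show k = (k - 1) + 1 by omega]
    ring
  have htot : S.ncard + Sᶜ.ncard = η * k + l := by
    rw [Set.ncard_add_ncard_compl]
    simp
  have hbig : max η l + 1 ≤ A.ncard + B.ncard := by omega
  have hdisj : ∀ U : Set ((Fin η × Fin k) ⊕ Fin l), U ⊆ Sᶜ → Disjoint U S := by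
    intro U hU
    rw [Set.disjoint_left]
    exact fun x hx => hU hx
  by_cases hA2 : ∃ i : Fin η, ∃ a b : Fin k, a ≠ b ∧ (i, a) ∈ A ∧ (i, b) ∈ A
  · obtain ⟨i, a, b, hab, ha, hb⟩ := hA2
    refine fort_blocks {inl (i,a), inl (i,b)} S (by simp) (fortI i hab) (hdisj _ ?_) hS
    rintro x (rfl | rfl)
    exacts [hAS _ ha, hAS _ hb]
  · have hAinj : Set.InjOn Prod.fst A := by
      rintro ⟨i, a⟩ hp ⟨i', b⟩ hq he
      simp only at he
      subst he
      by_cases hab : a = b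
      · rw [hab]
      · exact absurd ⟨i, a, b, hab, hp, hq⟩ hA2
    have hAcard : A.ncard ≤ η := by
      rw [← Set.ncard_image_of_injOn hAinj]
      calc (Prod.fst '' A).ncard ≤ (Set.univ : Set (Fin η)).ncard :=
            Set.ncard_le_ncard (Set.subset_univ _) (Set.toFinite _)
        _ = η := by rw [Set.ncard_univ]; simp
    by_cases hB2 : ∃ c c' : Fin l, c ≠ c' ∧ c ∈ B ∧ c' ∈ B
    · obtain ⟨c, c', hcc, hc, hc'⟩ := hB2
      by_cases hA2' : ∃ p p' : Fin η × Fin k, p ≠ p' ∧ p ∈ A ∧ p' ∈ A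
      · obtain ⟨p, p', hpp, hp, hp'⟩ := hA2'
        refine fort_blocks {inr c, inr c', inl p, inl p'} S (by simp)
          (fortII hcc hpp) (hdisj _ ?_) hS
        rintro x (rfl | rfl | rfl | rfl)
        exacts [hBS _ hc, hBS _ hc', hAS _ hp, hAS _ hp']
      · have hA1 : A.ncard ≤ 1 := by
          by_contra h1
          push_neg at h1
          obtain ⟨p, p', hp, hp', hpp⟩ := (Set.one_lt_ncard_iff (Set.toFinite _)).mp h1
          exact hA2' ⟨p, p', hpp, hp, hp'⟩
        have hBall : B = Set.univ := by
          apply Set.eq_of_subset_of_ncard_le (Set.subset_univ _) _ (Set.toFinite _)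
          rw [Set.ncard_univ]
          simp only [Nat.card_eq_fintype_card, Fintype.card_fin]
          omega
        have hAne : A.Nonempty := by
          apply Set.nonempty_of_ncard_ne_zero
          have : B.ncard = l := by rw [hBall, Set.ncard_univ]; simp
          omega
        obtain ⟨p, hp⟩ := hAne
        refine fort_blocks (insert (inl p)
            (Set.range (inr : Fin l → (Fin η × Fin k) ⊕ Fin l))) S (by simp)
          (fortIV hl p) (hdisj _ ?_) hS
        rintro x (rfl | ⟨c₀, rfl⟩)
        · exact hAS _ hp
        · exact hBS _ (hBall ▸ Set.mem_univ c₀)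
    · have hB1 : B.ncard ≤ 1 := by
        by_contra h1
        push_neg at h1
        obtain ⟨c, c', hc, hc', hcc⟩ := (Set.one_lt_ncard_iff (Set.toFinite _)).mp h1
        exact hB2 ⟨c, c', hcc, hc, hc'⟩
      have hAcard_ge : η ≤ A.ncard := by omega
      have heq : Prod.fst '' A = Set.univ := by
        apply Set.eq_of_subset_of_ncard_le (Set.subset_univ _) _ (Set.toFinite _)
        rw [Set.ncard_univ, Set.ncard_image_of_injOn hAinj]
        simpa using hAcard_ge
      have hsurj : ∀ i : Fin η, ∃ a : Fin k, (i, a) ∈ A := by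
        intro i
        have : i ∈ Prod.fst '' A := by rw [heq]; trivial
        obtain ⟨p, hpA, hpi⟩ := this
        exact ⟨p.2, by rwa [← hpi, Prod.mk.eta]⟩
      choose f hf using hsurj
      have hBne : B.Nonempty := by
        apply Set.nonempty_of_ncard_ne_zero
        omega
      obtain ⟨c, hc⟩ := hBne
      refine fort_blocks (insert (inr c)
          (Set.range fun i => (inl (i, f i) : (Fin η × Fin k) ⊕ Fin l))) S (by simp)
        (fortIII hη c f) (hdisj _ ?_) hS
      rintro x (rfl | ⟨i, rfl⟩)
      · exact hBS _ hc
      · exact hAS _ (hf i)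

end Windmill
/-- for `η, k, l ≥ 2`,
`Z₀(W''(η,k,l)) = min (η(k-1) + l) (ηk)`, where `Z₀ = Z₊`. -/
theorem stmt14 (η k l : ℕ) (hη : 2 ≤ η) (hk : 2 ≤ k) (hl : 2 ≤ l) :
    qZeroForcingNumber (windmillII η k l) 0 = min (η * (k - 1) + l) (η * k) ∧
    psdZeroForcingNumber (windmillII η k l) = min (η * (k - 1) + l) (η * k) := by
  classical
  set S1 : Set ((Fin η × Fin k) ⊕ Fin l) :=
    (Set.range fun i : Fin η =>
      (inl (i, ⟨0, by omega⟩) : (Fin η × Fin k) ⊕ Fin l))ᶜ with hS1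
  set S2 : Set ((Fin η × Fin k) ⊕ Fin l) :=
    Set.range (inl : Fin η × Fin k → (Fin η × Fin k) ⊕ Fin l) with hS2
  have hz : (⟨1, by omega⟩ : Fin k) ≠ ⟨0, by omega⟩ := by simp [Fin.ext_iff]
  have hind1 := indep_S1 (η := η) (l := l) hz
  have hind2 := indep_S2 (l := l) (⟨0, by omega⟩ : Fin η) (⟨0, by omega⟩ : Fin k)
  have hforce1 : Relation.ReflTransGen (psdStep (windmillII η k l)) S1 Set.univ :=
    psd_fill_of_indep _ hind1
  have hforce2 : Relation.ReflTransGen (psdStep (windmillII η k l)) S2 Set.univ :=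
    psd_fill_of_indep _ hind2
  have hn1 : S1.ncard = η * (k - 1) + l := ncard_S1 (by omega)
  have hn2 : S2.ncard = η * k := ncard_S2
  have hgame1 : ZqWinFrom (windmillII η k l) 0 ∅ (η * (k - 1) + l) := by
    have h0 := game_of_indep S1 hind1
    have hfin : S1.Finite := Set.toFinite _
    have := game_fill hfin.toFinset ∅
      (by rw [Set.empty_union, Set.Finite.coe_toFinset]; exact h0)
    rwa [zero_add, ← Set.ncard_eq_toFinset_card, hn1] at this
  have hgame2 : ZqWinFrom (windmillII η k l) 0 ∅ (η * k) := by
    have h0 := game_of_indep S2 hind2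
    have hfin : S2.Finite := Set.toFinite _
    have := game_fill hfin.toFinset ∅
      (by rw [Set.empty_union, Set.Finite.coe_toFinset]; exact h0)
    rwa [zero_add, ← Set.ncard_eq_toFinset_card, hn2] at this
  constructor
  · apply le_antisymm
    · rcases le_total (η * (k - 1) + l) (η * k) with hle | hle
      · rw [min_eq_left hle]; exact Nat.sInf_le hgame1
      · rw [min_eq_right hle]; exact Nat.sInf_le hgame2
    · refine le_csInf ⟨_, hgame1⟩ fun t ht => ?_
      obtain ⟨T, hT, hchain⟩ := zq_to_psd ht
      rw [Set.empty_union] at hchain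
      exact le_trans (psd_lower hη hk hl T hchain) hT
  · apply le_antisymm
    · rcases le_total (η * (k - 1) + l) (η * k) with hle | hle
      · rw [min_eq_left hle]; exact Nat.sInf_le ⟨S1, hn1, hforce1⟩
      · rw [min_eq_right hle]; exact Nat.sInf_le ⟨S2, hn2, hforce2⟩
    · refine le_csInf ⟨S1.ncard, ⟨S1, rfl, hforce1⟩⟩ ?_
      rintro n ⟨S, rfl, hforce⟩
      exact psd_lower hη hk hl S hforce

end ZqForcing
end

section
/- For all integers η, k, l ≥ 2, the zero forcing number of the generalized windmill graph of Type II satisfies Z(W''(η,k,l)) = η(k−1) + l. -/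
namespace ZqForcing

variable {V : Type*}

section WindmillAux
variable {η k l : ℕ}

private lemma wII_adj_ll {i i' : Fin η} {a a' : Fin k} :
    (windmillII η k l).Adj (Sum.inl (i,a)) (Sum.inl (i',a')) ↔ i = i' ∧ a ≠ a' := by
  simp only [windmillII, SimpleGraph.fromRel_adj]
  constructor
  · rintro ⟨hne, h | h⟩ <;> subst h <;> exact ⟨rfl, fun h => hne (by rw [h])⟩
  · rintro ⟨rfl, h⟩
    exact ⟨by simp [h], Or.inl rfl⟩

private lemma wII_adj_lr {i : Fin η} {a : Fin k} {c : Fin l} :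
    (windmillII η k l).Adj (Sum.inl (i,a)) (Sum.inr c) := by
  simp [windmillII, SimpleGraph.fromRel_adj]

private lemma wII_adj_rl {i : Fin η} {a : Fin k} {c : Fin l} :
    (windmillII η k l).Adj (Sum.inr c) (Sum.inl (i,a)) := by
  simp [windmillII, SimpleGraph.fromRel_adj]

private lemma wII_not_adj_rr {c c' : Fin l} :
    ¬ (windmillII η k l).Adj (Sum.inr c) (Sum.inr c') := by
  simp [windmillII, SimpleGraph.fromRel_adj]

/-- A "fort" disjoint from `S` obstructs zero forcing. -/
private lemma not_forcing_of_fort {W : Type*} (G : SimpleGraph W) (S T : Set W)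
    (hne : T.Nonempty) (hdisj : ∀ x ∈ T, x ∉ S)
    (hfort : ∀ w, w ∉ T → ∀ v ∈ T, G.Adj w v → ∃ v', v' ∈ T ∧ v' ≠ v ∧ G.Adj w v') :
    ¬ IsZeroForcingSet G S := by
  intro h
  have key : ∀ F F' : Set W, Relation.ReflTransGen (zfStep G) F F' →
      (∀ x ∈ T, x ∉ F) → (∀ x ∈ T, x ∉ F') := by
    intro F F' hrel
    induction hrel with
    | refl => exact fun h => h
    | tail _ hstep ih =>
      intro hF x hx
      obtain ⟨u, v, ⟨-, -, huF, hvF, hadj, huniq⟩, rfl⟩ := hstep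
      have hF' := ih hF
      intro hxmem
      rcases Set.mem_insert_iff.mp hxmem with rfl | hxF
      · have huT : x ≠ u := fun h => hF' u (h ▸ hx) huF
        obtain ⟨v', hv'T, hv'ne, hadj'⟩ := hfort u (fun hu => hF' u hu huF) x hx hadj
        exact hv'ne (huniq v' trivial hadj' (hF' v' hv'T))
      · exact hF' x hx hxF
  obtain ⟨x, hx⟩ := hne
  exact key S Set.univ h hdisj x hx trivial

private def Fm (η k l m : ℕ) : Set ((Fin η × Fin k) ⊕ Fin l) :=
  {x | ∀ (i : Fin η) (a : Fin k), x = Sum.inl (i, a) → a.val ≠ 0 ∨ i.val < m}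

private lemma mem_Fm {m : ℕ} {x : (Fin η × Fin k) ⊕ Fin l} :
    x ∈ Fm η k l m ↔ ∀ (i : Fin η) (a : Fin k), x = Sum.inl (i, a) → a.val ≠ 0 ∨ i.val < m :=
  Iff.rfl


private lemma Fm_step (hk : 2 ≤ k) {m : ℕ} (hm : m < η) :
    zfStep (windmillII η k l) (Fm η k l m) (Fm η k l (m+1)) := by
  have hk0 : 0 < k := by omega
  have hk1 : 1 < k := hk
  refine ⟨Sum.inl (⟨m, hm⟩, ⟨1, hk1⟩), Sum.inl (⟨m, hm⟩, ⟨0, hk0⟩),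
    ⟨trivial, trivial, ?_, ?_, ?_, ?_⟩, ?_⟩
  · rw [mem_Fm]
    intro i a h
    rw [Sum.inl.injEq, Prod.mk.injEq] at h
    left
    rw [← h.2]
    simp
  · rw [mem_Fm]
    intro hv
    have := hv ⟨m, hm⟩ ⟨0, hk0⟩ rfl
    simp at this
  · exact wII_adj_ll.mpr ⟨rfl, by simp [Fin.ext_iff]⟩
  · intro w _ hadj hw
    rw [mem_Fm] at hw
    push_neg at hw
    obtain ⟨i, a, rfl, ha0, -⟩ := hw
    obtain ⟨hi, -⟩ := wII_adj_ll.mp hadj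
    have ha : a = ⟨0, hk0⟩ := Fin.val_injective (by simpa using ha0)
    rw [← hi, ha]
  · ext x
    simp only [Set.mem_insert_iff, mem_Fm]
    constructor
    · intro hx
      by_cases hxv : x = Sum.inl (⟨m, hm⟩, ⟨0, hk0⟩)
      · exact Or.inl hxv
      · refine Or.inr fun i a h => ?_
        rcases hx i a h with h0 | hlt
        · exact Or.inl h0
        · by_cases h0 : a.val = 0
          · by_cases him : i.val < m
            · exact Or.inr him
            · exfalso
              apply hxv
              have hi : i = ⟨m, hm⟩ := Fin.val_injective (by simp; omega)
              have ha : a = ⟨0, hk0⟩ := Fin.val_injective (by simpa using h0)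
              rw [h, hi, ha]
          · exact Or.inl h0
    · rintro (rfl | hx)
      · intro i a h
        rw [Sum.inl.injEq, Prod.mk.injEq] at h
        refine Or.inr ?_
        rw [← h.1]
        simp
      · intro i a h
        rcases hx i a h with h0 | hlt
        · exact Or.inl h0
        · exact Or.inr (by omega)

private lemma Fm_forcing (hk : 2 ≤ k) :
    IsZeroForcingSet (windmillII η k l) (Fm η k l 0) := by
  have hFη : Fm η k l η = Set.univ := by
    ext x
    simp only [Set.mem_univ, iff_true, mem_Fm]
    rintro i a -
    exact Or.inr i.isLt
  have hchain : ∀ j, Relation.ReflTransGen (zfStep (windmillII η k l))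
      (Fm η k l (η - j)) (Fm η k l η) := by
    intro j
    induction j with
    | zero => simpa using Relation.ReflTransGen.refl
    | succ j ih =>
      by_cases hj : j < η
      · have h1 : η - (j+1) < η := by omega
        have h2 : η - (j+1) + 1 = η - j := by omega
        have hs := Fm_step (l := l) hk h1
        rw [h2] at hs
        exact Relation.ReflTransGen.head hs ih
      · have h2 : η - (j+1) = η - j := by omega
        rw [h2]
        exact ih
    
  have := hchain η
  rw [Nat.sub_self, hFη] at this
  exact this


private lemma Fm_zero_ncard (hη : 2 ≤ η) (hk : 2 ≤ k) :
    (Fm η k l 0).ncard = η * (k - 1) + l := by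
  have hk0 : 0 < k := by omega
  have hinj : Function.Injective
      (fun i : Fin η => (Sum.inl (i, (⟨0, hk0⟩ : Fin k)) : (Fin η × Fin k) ⊕ Fin l)) := by
    intro a b h
    simpa using h
  have hcompl : (Fm η k l 0)ᶜ =
      Set.range (fun i : Fin η => (Sum.inl (i, (⟨0, hk0⟩ : Fin k)) : (Fin η × Fin k) ⊕ Fin l)) := by
    ext x
    simp only [Set.mem_compl_iff, mem_Fm, Set.mem_range]
    constructor
    · intro hx
      push_neg at hx
      obtain ⟨i, a, rfl, ha, -⟩ := hx
      have : a = ⟨0, hk0⟩ := Fin.val_injective (by simpa using ha)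
      exact ⟨i, by rw [this]⟩
    · rintro ⟨i, rfl⟩
      push_neg
      exact ⟨i, ⟨0, hk0⟩, rfl, rfl, by omega⟩
  have hc : (Fm η k l 0)ᶜ.ncard = η := by
    rw [hcompl, ← Nat.card_coe_set_eq, Nat.card_range_of_injective hinj]
    simp
  have hV : Nat.card ((Fin η × Fin k) ⊕ Fin l) = η * k + l := by
    simp [Nat.card_eq_fintype_card]
  have h := Set.ncard_add_ncard_compl (Fm η k l 0)
  rw [hc, hV] at h
  have hmul : η * k = η * (k - 1) + η := by
    conv_lhs => rw [← Nat.sub_add_cancel (show 1 ≤ k by omega)]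
    rw [Nat.mul_succ]
  rw [hmul] at h
  generalize η * (k - 1) = M at h ⊢
  omega

private lemma lower_bound (hη : 2 ≤ η) (hk : 2 ≤ k) {S : Set ((Fin η × Fin k) ⊕ Fin l)}
    (hS : IsZeroForcingSet (windmillII η k l) S) : η * (k - 1) + l ≤ S.ncard := by
  have hU : Sᶜ.ncard ≤ η := by
    by_contra hU
    push_neg at hU
    by_cases hc1 : ∃ (i : Fin η) (a b : Fin k),
        a ≠ b ∧ Sum.inl (i, a) ∈ Sᶜ ∧ Sum.inl (i, b) ∈ Sᶜ
    · obtain ⟨i, a, b, hab, ha, hb⟩ := hc1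
      refine not_forcing_of_fort (windmillII η k l) S
        {Sum.inl (i, a), Sum.inl (i, b)} ⟨_, Or.inl rfl⟩ ?_ ?_ hS
      · rintro x (rfl | rfl)
        exacts [ha, hb]
      · intro w hw v hv hadj
        rcases hv with rfl | rfl
        · refine ⟨Sum.inl (i, b), Or.inr rfl, by simp [hab.symm], ?_⟩
          rcases w with ⟨j, x⟩ | c'
          · obtain ⟨rfl, -⟩ := wII_adj_ll.mp hadj
            refine wII_adj_ll.mpr ⟨rfl, fun h => hw ?_⟩
            rw [h]
            exact Or.inr rfl
          · exact wII_adj_rl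
        · refine ⟨Sum.inl (i, a), Or.inl rfl, by simp [hab], ?_⟩
          rcases w with ⟨j, x⟩ | c'
          · obtain ⟨rfl, -⟩ := wII_adj_ll.mp hadj
            refine wII_adj_ll.mpr ⟨rfl, fun h => hw ?_⟩
            rw [h]
            exact Or.inl rfl
          · exact wII_adj_rl
    · by_cases hc2 : ∃ c c' : Fin l, c ≠ c' ∧ Sum.inr c ∈ Sᶜ ∧ Sum.inr c' ∈ Sᶜ
      · obtain ⟨c, c', hcc, hc, hc'⟩ := hc2
        refine not_forcing_of_fort (windmillII η k l) S
          {Sum.inr c, Sum.inr c'} ⟨_, Or.inl rfl⟩ ?_ ?_ hS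
        · rintro x (rfl | rfl)
          exacts [hc, hc']
        · intro w hw v hv hadj
          rcases hv with rfl | rfl
          · rcases w with ⟨j, x⟩ | c''
            · exact ⟨Sum.inr c', Or.inr rfl, by simp [hcc.symm], wII_adj_lr⟩
            · exact absurd hadj wII_not_adj_rr
          · rcases w with ⟨j, x⟩ | c''
            · exact ⟨Sum.inr c, Or.inl rfl, by simp [hcc], wII_adj_lr⟩
            · exact absurd hadj wII_not_adj_rr
      · push_neg at hc1 hc2
        set g : (Fin η × Fin k) ⊕ Fin l → Option (Fin η) :=
          Sum.elim (fun p => some p.1) (fun _ => none) with hg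
        have hginj : Set.InjOn g Sᶜ := by
          rintro (⟨i, a⟩ | c) hx (⟨j, b⟩ | c') hy hxy
          · simp only [hg, Sum.elim_inl, Option.some.injEq] at hxy
            subst hxy
            by_cases hab : a = b
            · rw [hab]
            · exact absurd hy (hc1 i a b hab hx)
          · simp [hg] at hxy
          · simp [hg] at hxy
          · by_cases hcc : c = c'
            · rw [hcc]
            · exact absurd hy (hc2 c c' hcc hx)
        have himg : g '' Sᶜ = Set.univ := by
          apply Set.eq_of_subset_of_ncard_le (Set.subset_univ _) ?_ Set.finite_univ
          rw [Set.ncard_univ, Set.ncard_image_of_injOn hginj]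
          simp only [Nat.card_eq_fintype_card, Fintype.card_option, Fintype.card_fin]
          omega
        have hcU : ∃ c : Fin l, Sum.inr c ∈ Sᶜ := by
          have : (none : Option (Fin η)) ∈ g '' Sᶜ := himg ▸ Set.mem_univ _
          obtain ⟨(⟨i, a⟩ | c), hx, hgx⟩ := this
          · simp [hg] at hgx
          · exact ⟨c, hx⟩
        obtain ⟨c, hc⟩ := hcU
        have hiU : ∀ i : Fin η, ∃ a : Fin k, Sum.inl (i, a) ∈ Sᶜ := by
          intro i
          have : (some i : Option (Fin η)) ∈ g '' Sᶜ := himg ▸ Set.mem_univ _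
          obtain ⟨(⟨j, a⟩ | c'), hx, hgx⟩ := this
          · simp only [hg, Sum.elim_inl, Option.some.injEq] at hgx
            exact ⟨a, hgx ▸ hx⟩
          · simp [hg] at hgx
        choose f hf using hiU
        refine not_forcing_of_fort (windmillII η k l) S
          (insert (Sum.inr c) (Set.range fun i => Sum.inl (i, f i)))
          ⟨_, Set.mem_insert _ _⟩ ?_ ?_ hS
        · rintro x (rfl | ⟨i, rfl⟩)
          exacts [hc, hf i]
        · intro w hw v hv hadj
          rcases hv with rfl | ⟨i, rfl⟩
          · rcases w with ⟨j, x⟩ | c''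
            · refine ⟨Sum.inl (j, f j), Set.mem_insert_iff.mpr (Or.inr ⟨j, rfl⟩),
                by simp, wII_adj_ll.mpr ⟨rfl, fun h => hw ?_⟩⟩
              rw [h]
              exact Set.mem_insert_iff.mpr (Or.inr ⟨j, rfl⟩)
            · exact absurd hadj wII_not_adj_rr
          · rcases w with ⟨j, x⟩ | c''
            · exact ⟨Sum.inr c, Set.mem_insert _ _, by simp, wII_adj_lr⟩
            · obtain ⟨i', hi'⟩ := Fintype.exists_ne_of_one_lt_card
                (by simp; omega : 1 < Fintype.card (Fin η)) i
              exact ⟨Sum.inl (i', f i'), Set.mem_insert_iff.mpr (Or.inr ⟨i', rfl⟩),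
                by simp [hi'], wII_adj_rl⟩
  have hV : Nat.card ((Fin η × Fin k) ⊕ Fin l) = η * k + l := by
    simp [Nat.card_eq_fintype_card]
  have h := Set.ncard_add_ncard_compl S
  rw [hV] at h
  have hmul : η * k = η * (k - 1) + η := by
    conv_lhs => rw [← Nat.sub_add_cancel (show 1 ≤ k by omega)]
    rw [Nat.mul_succ]
  rw [hmul] at h
  generalize η * (k - 1) = M at h ⊢
  omega

/-- for `η, k, l ≥ 2`, `Z(W''(η,k,l)) = η(k-1) + l`. -/
theorem stmt15 (η k l : ℕ) (hη : 2 ≤ η) (hk : 2 ≤ k) (hl : 2 ≤ l) :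
    zeroForcingNumber (windmillII η k l) = η * (k - 1) + l :=  by
  have hmem : η * (k - 1) + l ∈
      {n | ∃ S : Set ((Fin η × Fin k) ⊕ Fin l), S.ncard = n ∧
        IsZeroForcingSet (windmillII η k l) S} :=
    ⟨Fm η k l 0, Fm_zero_ncard hη hk, Fm_forcing hk⟩
  refine le_antisymm (Nat.sInf_le hmem) (le_csInf ⟨_, hmem⟩ ?_)
  rintro m ⟨S, rfl, hS⟩
  exact lower_bound hη hk hS

end WindmillAux

end ZqForcing
end

section
/- Let H be a generalized star (spider) graph with k ≥ 2 legs. Then for every integer q ≥ 1, Z_q(H) = k − 1. -/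
namespace ZqForcing

variable {V : Type*}

/-!
Call a leg untouched while none of its vertices is filled. A token touches at most one leg, and
a force can enter an untouched leg only from the centre, hence only when it is the last untouched
leg. In Rule 3 the oracle reveals the selected components that avoid every untouched leg. If there
are none, each of the at least two selected components meets an untouched leg; then the centre is
filled (otherwise these components would coincide), each of them is a whole untouched leg, and
revealing all of them permits no force. So a won position with `t` tokens to spare has at most
`t + 1` untouched legs, whence `Z_q ≥ k - 1`.

Conversely, the leaves of all legs but one form a zero forcing set: each of these legs is forced
from its leaf down to the centre, and the centre then forces its way up the remaining leg.
-/

open Relation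

section Forcing

variable {V : Type*} {G : SimpleGraph V} {q : ℕ}

theorem reachAvoid_symm {F : Set V} {x y : V} (h : reachAvoid G F x y) :
    reachAvoid G F y x := by
  induction h with
  | refl => exact .refl
  | tail _ hab ih => exact .head ⟨hab.1.symm, hab.2.2, hab.2.1⟩ ih

theorem eq_setOf_reachAvoid_of_mem_unfilledComponents {F C : Set V} {x : V}
    (hC : C ∈ unfilledComponents G F) (hx : x ∈ C) : C = {w | reachAvoid G F x w} := by
  obtain ⟨v, -, rfl⟩ := hC
  ext w
  exact ⟨fun hw => (reachAvoid_symm hx).trans hw, fun hw => ReflTransGen.trans hx hw⟩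

theorem eq_of_mem_unfilledComponents {F C C' : Set V} {x : V}
    (hC : C ∈ unfilledComponents G F) (hC' : C' ∈ unfilledComponents G F)
    (hx : x ∈ C) (hx' : x ∈ C') : C = C' := by
  rw [eq_setOf_reachAvoid_of_mem_unfilledComponents hC hx,
    eq_setOf_reachAvoid_of_mem_unfilledComponents hC' hx']

theorem subset_of_reflTransGen_rule3Step {A F F' : Set V} (hFA : F ⊆ A)
    (h : ReflTransGen (rule3Step G A) F F') : F' ⊆ A := by
  induction h with
  | refl => exact hFA
  | tail _ hstep ih =>
    obtain ⟨u, v, hf, rfl⟩ := hstep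
    exact Set.insert_subset hf.2.1 ih

theorem reflTransGen_zfStep_path {F : Set V} (p : ℕ → V) (n : ℕ) (h0 : p 0 ∈ F)
    (hadj : ∀ j < n, G.Adj (p j) (p (j + 1)))
    (hnbr : ∀ j < n, ∀ w, G.Adj (p j) w → w ∈ F ∪ p '' Set.Iic (j + 1)) :
    ReflTransGen (zfStep G) F (F ∪ p '' Set.Iic n) := by
  induction n with
  | zero =>
    rw [show Set.Iic 0 = {0} by ext; simp, Set.image_singleton, Set.union_singleton,
      Set.insert_eq_of_mem h0]
  | succ n ih =>
    rw [show Set.Iic (n + 1) = insert (n + 1) (Set.Iic n) from Order.Iic_succ n,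
      Set.image_insert_eq, Set.union_insert]
    refine (ih (fun j hj => hadj j (by omega)) (fun j hj => hnbr j (by omega))).trans ?_
    by_cases hmem : p (n + 1) ∈ F ∪ p '' Set.Iic n
    · rw [Set.insert_eq_of_mem hmem]
    have hpn : p n ∈ F ∪ p '' Set.Iic n := .inr (Set.mem_image_of_mem p Set.self_mem_Iic)
    refine .single ⟨p n, p (n + 1), ⟨trivial, trivial, hpn, hmem, hadj n n.lt_succ_self,
      fun w _ hw hwF => ?_⟩, rfl⟩
    rcases hnbr n n.lt_succ_self w hw with hF | ⟨i, hi, rfl⟩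
    · exact absurd (.inl hF) hwF
    · obtain hi | rfl : i ≤ n ∨ i = n + 1 := by rw [Set.mem_Iic] at hi; omega
      · exact absurd (.inr (Set.mem_image_of_mem p (Set.mem_Iic.2 hi))) hwF
      · rfl

theorem reflTransGen_zfStep_biUnion {ι : Type*} {F : Set V} (s : Finset ι) (B : ι → Set V)
    (h : ∀ i ∈ s, ∀ F', F ⊆ F' → ReflTransGen (zfStep G) F' (F' ∪ B i)) :
    ReflTransGen (zfStep G) F (F ∪ ⋃ i ∈ s, B i) := by
  classical
  induction s using Finset.induction_on with
  | empty => simpa using ReflTransGen.refl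
  | @insert a s _ ih =>
    refine (ih fun i hi => h i (Finset.mem_insert_of_mem hi)).trans ?_
    rw [Finset.set_biUnion_insert, Set.union_comm (B a), ← Set.union_assoc]
    exact h a (Finset.mem_insert_self a s) _ Set.subset_union_left

theorem ZqWinFrom.of_reflTransGen_zfStep {F : Set V} (t : ℕ)
    (h : ReflTransGen (zfStep G) F Set.univ) : ZqWinFrom G q F t := by
  induction h using ReflTransGen.head_induction_on with
  | refl => exact .done t
  | head hstep _ ih =>
    obtain ⟨u, v, hf, rfl⟩ := hstep
    exact .rule2 u v hf ih

theorem ZqWinFrom.of_isZeroForcingSet {S : Set V} (hS : S.Finite) (h : IsZeroForcingSet G S) :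
    ZqWinFrom G q ∅ S.ncard := by
  suffices ∀ F, Disjoint F S → ReflTransGen (zfStep G) (F ∪ S) Set.univ →
      ZqWinFrom G q F S.ncard by
    exact this ∅ (Set.empty_disjoint S) (by rwa [Set.empty_union])
  clear h
  induction S, hS using Set.Finite.induction_on with
  | empty => exact fun F _ hF => .of_reflTransGen_zfStep _ (by rwa [Set.union_empty] at hF)
  | @insert a S ha hS ih =>
    intro F hFS hF
    rw [Set.ncard_insert_of_notMem ha hS]
    refine .rule1 a (Set.disjoint_right.1 hFS (Set.mem_insert a S)) (ih _ ?_ ?_)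
    · exact Set.disjoint_insert_left.2 ⟨ha, hFS.mono_right (Set.subset_insert a S)⟩
    · rwa [Set.insert_union, ← Set.union_insert]

end Forcing

section Spider

variable {k : ℕ} {m : Fin k → ℕ}

theorem spider_adj_none_some {i : Fin k} {j : Fin (m i)} :
    (spider m).Adj none (some ⟨i, j⟩) ↔ (j : ℕ) = 0 := by
  simp [spider, SimpleGraph.fromRel_adj]

theorem spider_adj_some_some {i i' : Fin k} {j : Fin (m i)} {j' : Fin (m i')} :
    (spider m).Adj (some ⟨i, j⟩) (some ⟨i', j'⟩) ↔
      (i = i' ∧ (j : ℕ) + 1 = j') ∨ (i' = i ∧ (j' : ℕ) + 1 = j) := by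
  simp only [spider, SimpleGraph.fromRel_adj]
  refine ⟨fun h => h.2, fun h => ⟨fun hEq => ?_, h⟩⟩
  obtain ⟨rfl, hj⟩ := Sigma.mk.inj_iff.1 (Option.some_injective _ hEq)
  cases eq_of_heq hj
  omega

def legSet (m : Fin k → ℕ) (i : Fin k) : Set (Option (Σ i : Fin k, Fin (m i))) :=
  Set.range fun j => some ⟨i, j⟩

theorem eq_of_mem_legSet {v : Option (Σ i : Fin k, Fin (m i))} {i i' : Fin k}
    (h : v ∈ legSet m i) (h' : v ∈ legSet m i') : i = i' := by
  obtain ⟨j, rfl⟩ := h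
  obtain ⟨j', hj'⟩ := h'
  exact (congrArg Sigma.fst (Option.some_injective _ hj')).symm

theorem eq_none_or_mem_legSet_of_spider_adj {i : Fin k} {x w : Option (Σ i : Fin k, Fin (m i))}
    (hx : x ∈ legSet m i) (h : (spider m).Adj x w) : w = none ∨ w ∈ legSet m i := by
  obtain ⟨j, rfl⟩ := hx
  match w with
  | none => exact .inl rfl
  | some ⟨i', j'⟩ =>
    obtain ⟨rfl, -⟩ | ⟨rfl, -⟩ := spider_adj_some_some.1 h <;> exact .inr ⟨j', rfl⟩

/-- The vertex of leg `i` at distance `d` from the centre `none`; beyond the leaf it is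
`none` again. -/
def legPoint (m : Fin k → ℕ) (i : Fin k) : ℕ → Option (Σ i : Fin k, Fin (m i))
  | 0 => none
  | d + 1 => if h : d < m i then some ⟨i, ⟨d, h⟩⟩ else none

theorem legPoint_succ {i : Fin k} {d : ℕ} (h : d < m i) :
    legPoint m i (d + 1) = some ⟨i, ⟨d, h⟩⟩ :=
  dif_pos h

theorem legPoint_coe_succ {i : Fin k} (j : Fin (m i)) : legPoint m i (j + 1) = some ⟨i, j⟩ :=
  legPoint_succ j.isLt

theorem legPoint_mem_legSet {i : Fin k} {d : ℕ} (h₀ : 0 < d) (h : d ≤ m i) :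
    legPoint m i d ∈ legSet m i := by
  cases d with
  | zero => omega
  | succ d => rw [legPoint_succ (by omega)]; exact ⟨_, rfl⟩

theorem legPoint_image_Iic (i : Fin k) :
    legPoint m i '' Set.Iic (m i) = insert none (legSet m i) := by
  ext v
  constructor
  · rintro ⟨_ | d, hd, rfl⟩
    · exact .inl rfl
    · exact .inr (legPoint_mem_legSet d.succ_pos hd)
  · rintro (rfl | ⟨j, rfl⟩)
    · exact ⟨0, Nat.zero_le _, rfl⟩
    · exact ⟨j + 1, Set.mem_Iic.2 j.isLt, legPoint_coe_succ j⟩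

theorem spider_adj_legPoint {i : Fin k} {d : ℕ} (h : d < m i) :
    (spider m).Adj (legPoint m i d) (legPoint m i (d + 1)) := by
  rw [legPoint_succ h]
  cases d with
  | zero => exact spider_adj_none_some.2 rfl
  | succ d => rw [legPoint_succ (by omega)]; exact spider_adj_some_some.2 (.inl ⟨rfl, rfl⟩)

theorem eq_legPoint_of_spider_adj_legPoint {i : Fin k} {d : ℕ} (h : d < m i)
    {w : Option (Σ i : Fin k, Fin (m i))} (hw : (spider m).Adj (legPoint m i (d + 1)) w) :
    w = legPoint m i d ∨ (d + 1 < m i ∧ w = legPoint m i (d + 2)) := by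
  rw [legPoint_succ h] at hw
  match w with
  | none =>
    obtain rfl : d = 0 := spider_adj_none_some.1 hw.symm
    exact .inl rfl
  | some ⟨i', j'⟩ =>
    rw [← legPoint_coe_succ j']
    obtain ⟨rfl, hj⟩ | ⟨rfl, hj⟩ := spider_adj_some_some.1 hw
    · have hj : d + 1 = (j' : ℕ) := hj
      exact .inr ⟨by omega, by congr 1; omega⟩
    · have hj : (j' : ℕ) + 1 = d := hj
      exact .inl (by congr 1)

theorem exists_eq_legPoint_one_of_spider_adj_none {w : Option (Σ i : Fin k, Fin (m i))}
    (hw : (spider m).Adj none w) : ∃ i, 0 < m i ∧ w = legPoint m i 1 := by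
  match w with
  | none => exact absurd hw ((spider m).loopless.irrefl _)
  | some ⟨i, j⟩ =>
    refine ⟨i, j.pos, ?_⟩
    rw [← legPoint_coe_succ j, spider_adj_none_some.1 hw]

end Spider

section UpperBound

variable {k : ℕ} {m : Fin k → ℕ} {F : Set (Option (Σ i : Fin k, Fin (m i)))}

theorem reflTransGen_zfStep_legDown {i : Fin k} (hleaf : legPoint m i (m i) ∈ F) :
    ReflTransGen (zfStep (spider m)) F (F ∪ insert none (legSet m i)) := by
  have hpath := reflTransGen_zfStep_path (G := spider m) (fun j => legPoint m i (m i - j))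
    (m i) (by simpa using hleaf)
    (fun j hj => by
      have := (spider_adj_legPoint (m := m) (i := i) (d := m i - (j + 1)) (by omega)).symm
      rwa [show m i - (j + 1) + 1 = m i - j by omega] at this)
    (fun j hj w hw => by
      rw [show m i - j = m i - j - 1 + 1 by omega] at hw
      rcases eq_legPoint_of_spider_adj_legPoint (by omega) hw with rfl | ⟨hlt, rfl⟩
      · exact .inr ⟨j + 1, Set.self_mem_Iic, by simp only; congr 1⟩
      · exact .inr ⟨j - 1, Set.mem_Iic.2 (by omega), by simp only; congr 1; omega⟩)
  have himage : (fun j => legPoint m i (m i - j)) '' Set.Iic (m i) =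
      legPoint m i '' Set.Iic (m i) := by
    ext v
    constructor
    · rintro ⟨j, hj, rfl⟩
      exact ⟨m i - j, Set.mem_Iic.2 (Nat.sub_le _ _), rfl⟩
    · rintro ⟨d, hd, rfl⟩
      exact ⟨m i - d, Set.mem_Iic.2 (Nat.sub_le _ _), by
        simp only; congr 1; rw [Set.mem_Iic] at hd; omega⟩
  rwa [himage, legPoint_image_Iic] at hpath

theorem reflTransGen_zfStep_legUp {i : Fin k} (hc : none ∈ F)
    (hroots : ∀ i', i' ≠ i → 0 < m i' → legPoint m i' 1 ∈ F) :
    ReflTransGen (zfStep (spider m)) F (F ∪ insert none (legSet m i)) := by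
  rw [← legPoint_image_Iic]
  refine reflTransGen_zfStep_path (legPoint m i) (m i) hc (fun d hd => spider_adj_legPoint hd)
    fun j hj w hw => ?_
  cases j with
  | zero =>
    obtain ⟨i', hpos, rfl⟩ := exists_eq_legPoint_one_of_spider_adj_none hw
    by_cases hi' : i' = i
    · exact .inr ⟨1, Set.self_mem_Iic, by rw [hi']⟩
    · exact .inl (hroots i' hi' hpos)
  | succ d =>
    rcases eq_legPoint_of_spider_adj_legPoint (by omega) hw with rfl | ⟨-, rfl⟩
    · exact .inr ⟨d, Set.mem_Iic.2 (by omega), rfl⟩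
    · exact .inr ⟨d + 2, Set.self_mem_Iic, rfl⟩

def spiderLeaves (m : Fin k → ℕ) (i₀ : Fin k) : Set (Option (Σ i : Fin k, Fin (m i))) :=
  (fun i => legPoint m i (m i)) '' {i₀}ᶜ

theorem isZeroForcingSet_spiderLeaves {i₀ i₁ : Fin k} (h : i₁ ≠ i₀) :
    IsZeroForcingSet (spider m) (spiderLeaves m i₀) := by
  set L := spiderLeaves m i₀ ∪ ⋃ i ∈ Finset.univ.erase i₀, insert none (legSet m i)
  have hmem : ∀ {i v}, i ≠ i₀ → v ∈ insert none (legSet m i) → v ∈ L := fun hi hv =>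
    .inr (Set.mem_iUnion₂_of_mem (Finset.mem_erase.2 ⟨hi, Finset.mem_univ _⟩) hv)
  have hdown : ReflTransGen (zfStep (spider m)) (spiderLeaves m i₀) L :=
    reflTransGen_zfStep_biUnion _ _ fun i hi _ hF' =>
      reflTransGen_zfStep_legDown (hF' ⟨i, Finset.ne_of_mem_erase hi, rfl⟩)
  have hup := reflTransGen_zfStep_legUp (i := i₀) (hmem h (.inl rfl))
    fun i hi hpos => hmem hi (.inr (legPoint_mem_legSet one_pos hpos))
  have huniv : L ∪ insert none (legSet m i₀) = Set.univ := by
    refine Set.eq_univ_of_forall fun v => ?_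
    match v with
    | none => exact .inr (.inl rfl)
    | some ⟨i, j⟩ =>
      by_cases hi : i = i₀
      · subst hi
        exact .inr (.inr ⟨j, rfl⟩)
      · exact .inl (hmem hi (.inr ⟨j, rfl⟩))
  exact hdown.trans (huniv ▸ hup)

theorem ncard_spiderLeaves (hm : ∀ i, 1 ≤ m i) (i₀ : Fin k) :
    (spiderLeaves m i₀).ncard = k - 1 := by
  have hinj : Function.Injective fun i => legPoint m i (m i) :=
    fun i i' (h : legPoint m i _ = _) => eq_of_mem_legSet (legPoint_mem_legSet (hm i) le_rfl)
      (h ▸ legPoint_mem_legSet (hm i') le_rfl)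
  rw [spiderLeaves, Set.ncard_image_of_injective _ hinj, Set.ncard_compl, Set.ncard_singleton,
    Nat.card_eq_fintype_card, Fintype.card_fin]

end UpperBound

section LowerBound

variable {k : ℕ} {m : Fin k → ℕ} {F C : Set (Option (Σ i : Fin k, Fin (m i)))}
  {𝒞 : Set (Set (Option (Σ i : Fin k, Fin (m i))))}

def untouchedLegs (m : Fin k → ℕ) (F : Set (Option (Σ i : Fin k, Fin (m i)))) : Set (Fin k) :=
  {i | Disjoint (legSet m i) F}

theorem untouchedLegs_empty : untouchedLegs m ∅ = Set.univ :=
  Set.eq_univ_of_forall fun _ => Set.disjoint_empty _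

theorem untouchedLegs_univ (hm : ∀ i, 1 ≤ m i) : untouchedLegs m Set.univ = ∅ :=
  Set.eq_empty_of_forall_notMem fun i hi =>
    Set.disjoint_left.1 hi (legPoint_mem_legSet one_pos (hm i)) trivial

theorem ncard_untouchedLegs_le_insert (F : Set (Option (Σ i : Fin k, Fin (m i)))) (v) :
    (untouchedLegs m F).ncard ≤ (untouchedLegs m (insert v F)).ncard + 1 := by
  have hsub : untouchedLegs m F ⊆ untouchedLegs m (insert v F) ∪ {i | v ∈ legSet m i} :=
    fun i hi => by
      by_cases hv : v ∈ legSet m i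
      · exact .inr hv
      · exact .inl (Set.disjoint_insert_right.2 ⟨hv, hi⟩)
  have hlegs : {i | v ∈ legSet m i}.ncard ≤ 1 :=
    Set.ncard_le_one_iff_subsingleton.2 fun i hi i' hi' => eq_of_mem_legSet hi hi'
  calc (untouchedLegs m F).ncard
      ≤ (untouchedLegs m (insert v F) ∪ {i | v ∈ legSet m i}).ncard := Set.ncard_le_ncard hsub
    _ ≤ (untouchedLegs m (insert v F)).ncard + {i | v ∈ legSet m i}.ncard :=
      Set.ncard_union_le _ _
    _ ≤ (untouchedLegs m (insert v F)).ncard + 1 := by omega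

theorem eq_of_forceIn_of_mem_untouchedLegs {A : Set (Option (Σ i : Fin k, Fin (m i)))}
    {u v} {i i' : Fin k} (hf : forceIn (spider m) A F u v) (hi : i ∈ untouchedLegs m F)
    (hv : v ∈ legSet m i) (hi' : i' ∈ untouchedLegs m F) (hpos : 0 < m i')
    (hA : legPoint m i' 1 ∈ A) : i' = i := by
  obtain ⟨-, -, huF, -, huv, huniq⟩ := hf
  obtain rfl : u = none := (eq_none_or_mem_legSet_of_spider_adj hv huv.symm).resolve_right
    fun hu => Set.disjoint_left.1 hi hu huF
  have hroot := legPoint_mem_legSet (i := i') one_pos hpos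
  have hrootv : legPoint m i' 1 = v :=
    huniq _ hA (spider_adj_legPoint hpos) (Set.disjoint_left.1 hi' hroot)
  exact eq_of_mem_legSet (hrootv ▸ hroot) hv

theorem untouchedLegs_subset_or_subsingleton_of_forceIn (hm : ∀ i, 1 ≤ m i) {u v}
    (hf : forceIn (spider m) Set.univ F u v) :
    untouchedLegs m F ⊆ untouchedLegs m (insert v F) ∨ (untouchedLegs m F).Subsingleton := by
  by_cases hv : ∃ i ∈ untouchedLegs m F, v ∈ legSet m i
  · obtain ⟨i, hi, hvi⟩ := hv
    exact .inr fun a ha b hb => by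
      rw [eq_of_forceIn_of_mem_untouchedLegs hf hi hvi ha (hm a) trivial,
        eq_of_forceIn_of_mem_untouchedLegs hf hi hvi hb (hm b) trivial]
  · exact .inl fun i hi => Set.disjoint_insert_right.2 ⟨fun hvi => hv ⟨i, hi, hvi⟩, hi⟩

theorem reachAvoid_of_mem_legSet {i : Fin k} (hi : i ∈ untouchedLegs m F) {x y}
    (hx : x ∈ legSet m i) (hy : y ∈ legSet m i) : reachAvoid (spider m) F x y := by
  have hunfilled : ∀ d, 0 < d → d ≤ m i → legPoint m i d ∉ F := fun d h₀ h =>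
    Set.disjoint_left.1 hi (legPoint_mem_legSet h₀ h)
  have hup : ∀ a b : Fin (m i), a ≤ b →
      reachAvoid (spider m) F (some ⟨i, a⟩) (some ⟨i, b⟩) := by
    intro a b hab
    rw [← legPoint_coe_succ a, ← legPoint_coe_succ b]
    refine ReflTransGen.lift (legPoint m i) (fun _ _ h => h) _ _
      (reflTransGen_of_succ_of_le (fun c d => (spider m).Adj (legPoint m i c) (legPoint m i d) ∧
        legPoint m i c ∉ F ∧ legPoint m i d ∉ F) (fun c hc => ?_) (by omega))
    rw [Set.mem_Ico] at hc
    exact ⟨spider_adj_legPoint (by omega), hunfilled c (by omega) (by omega),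
      hunfilled (c + 1) (by omega) (by omega)⟩
  obtain ⟨a, rfl⟩ := hx
  obtain ⟨b, rfl⟩ := hy
  rcases le_total a b with hab | hba
  exacts [hup a b hab, reachAvoid_symm (hup b a hba)]

theorem mem_legSet_of_reachAvoid (hc : none ∈ F) {i : Fin k} {x w} (hx : x ∈ legSet m i)
    (h : reachAvoid (spider m) F x w) : w ∈ legSet m i := by
  induction h with
  | refl => exact hx
  | tail _ hstep ih =>
    exact (eq_none_or_mem_legSet_of_spider_adj ih hstep.1).resolve_left
      fun hw => hstep.2.2 (hw ▸ hc)

theorem none_mem_of_mem_unfilledComponents (hc : none ∉ F)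
    (hC : C ∈ unfilledComponents (spider m) F) {i : Fin k} (hi : i ∈ untouchedLegs m F) {x}
    (hx : x ∈ C) (hxi : x ∈ legSet m i) : none ∈ C := by
  obtain ⟨j, rfl⟩ := hxi
  have hroot := legPoint_mem_legSet (i := i) one_pos j.pos
  rw [eq_setOf_reachAvoid_of_mem_unfilledComponents hC hx]
  exact (reachAvoid_of_mem_legSet hi ⟨j, rfl⟩ hroot).tail
    ⟨(spider_adj_legPoint j.pos).symm, Set.disjoint_left.1 hi hroot, hc⟩

theorem eq_legSet_of_mem_unfilledComponents (hc : none ∈ F)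
    (hC : C ∈ unfilledComponents (spider m) F) {i : Fin k} (hi : i ∈ untouchedLegs m F) {x}
    (hx : x ∈ C) (hxi : x ∈ legSet m i) : C = legSet m i := by
  rw [eq_setOf_reachAvoid_of_mem_unfilledComponents hC hx]
  ext w
  exact ⟨mem_legSet_of_reachAvoid hc hxi, reachAvoid_of_mem_legSet hi hxi⟩

theorem not_rule3Step_of_forall_inter_legSet_nonempty (hm : ∀ i, 1 ≤ m i)
    (h𝒞 : 𝒞 ⊆ unfilledComponents (spider m) F) (hcard : 1 < 𝒞.ncard)
    (hmeet : ∀ C ∈ 𝒞, ∃ i ∈ untouchedLegs m F, (C ∩ legSet m i).Nonempty) (F') :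
    ¬rule3Step (spider m) (F ∪ ⋃₀ 𝒞) F F' := by
  obtain ⟨C₁, hC₁, C₂, hC₂, hne⟩ := (Set.one_lt_ncard (Set.toFinite _)).1 hcard
  have hc : none ∈ F := by
    by_contra hc
    obtain ⟨i₁, hi₁, x₁, hx₁, hxi₁⟩ := hmeet C₁ hC₁
    obtain ⟨i₂, hi₂, x₂, hx₂, hxi₂⟩ := hmeet C₂ hC₂
    exact hne (eq_of_mem_unfilledComponents (h𝒞 hC₁) (h𝒞 hC₂)
      (none_mem_of_mem_unfilledComponents hc (h𝒞 hC₁) hi₁ hx₁ hxi₁)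
      (none_mem_of_mem_unfilledComponents hc (h𝒞 hC₂) hi₂ hx₂ hxi₂))
  have hleg : ∀ C ∈ 𝒞, ∃ i ∈ untouchedLegs m F, C = legSet m i := fun C hC => by
    obtain ⟨i, hi, x, hx, hxi⟩ := hmeet C hC
    exact ⟨i, hi, eq_legSet_of_mem_unfilledComponents hc (h𝒞 hC) hi hx hxi⟩
  rintro ⟨u, v, hf, -⟩
  obtain ⟨C, hC, hvC⟩ := hf.2.1.resolve_left hf.2.2.2.1
  obtain ⟨i, hi, rfl⟩ := hleg C hC
  have hall : ∀ C' ∈ 𝒞, C' = legSet m i := fun C' hC' => by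
    obtain ⟨i', hi', rfl⟩ := hleg C' hC'
    rw [eq_of_forceIn_of_mem_untouchedLegs hf hi hvC hi' (hm i')
      (.inr ⟨_, hC', legPoint_mem_legSet one_pos (hm i')⟩)]
  exact hne ((hall C₁ hC₁).trans (hall C₂ hC₂).symm)

theorem exists_answer_untouchedLegs_subset (hm : ∀ i, 1 ≤ m i)
    (h𝒞 : 𝒞 ⊆ unfilledComponents (spider m) F) (hcard : 1 < 𝒞.ncard) :
    ∃ 𝒮 ⊆ 𝒞, 𝒮.Nonempty ∧ ∀ F', ReflTransGen (rule3Step (spider m) (F ∪ ⋃₀ 𝒮)) F F' →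
      untouchedLegs m F ⊆ untouchedLegs m F' := by
  by_cases h𝒯 : {C ∈ 𝒞 | ∀ i ∈ untouchedLegs m F, Disjoint C (legSet m i)}.Nonempty
  · refine ⟨_, Set.sep_subset _ _, h𝒯, fun F' hF' i hi => ?_⟩
    refine Set.disjoint_of_subset_right
      (subset_of_reflTransGen_rule3Step Set.subset_union_left hF') ?_
    exact Set.disjoint_union_right.2
      ⟨hi, Set.disjoint_sUnion_right.2 fun C hC => (hC.2 i hi).symm⟩
  · have hmeet : ∀ C ∈ 𝒞, ∃ i ∈ untouchedLegs m F, (C ∩ legSet m i).Nonempty :=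
      fun C hC => by
        by_contra h
        exact h𝒯 ⟨C, hC, fun i hi => Set.disjoint_iff_inter_eq_empty.2
          (Set.not_nonempty_iff_eq_empty.1 fun hne => h ⟨i, hi, hne⟩)⟩
    refine ⟨𝒞, subset_rfl, Set.nonempty_of_ncard_ne_zero (by omega), fun F' hF' => ?_⟩
    rcases hF'.cases_head with rfl | ⟨F'', hstep, -⟩
    · exact subset_rfl
    · exact absurd hstep
        (not_rule3Step_of_forall_inter_legSet_nonempty hm h𝒞 hcard hmeet F'')

theorem ncard_untouchedLegs_le_of_zqWinFrom (hm : ∀ i, 1 ≤ m i) {q t : ℕ} (hq : 1 ≤ q)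
    (h : ZqWinFrom (spider m) q F t) : (untouchedLegs m F).ncard ≤ t + 1 := by
  induction h with
  | done t => simp [untouchedLegs_univ hm]
  | rule1 v _ _ ih => exact (ncard_untouchedLegs_le_insert _ v).trans (by omega)
  | rule2 u v hf _ ih =>
    rcases untouchedLegs_subset_or_subsingleton_of_forceIn hm hf with hsub | hsub
    · exact (Set.ncard_le_ncard hsub).trans ih
    · exact (Set.ncard_le_one_iff_subsingleton.2 hsub).trans (by omega)
  | rule3 𝒞 h𝒞 hcard next hnext _ ih =>
    obtain ⟨𝒮, h𝒮, hne, hsub⟩ := exists_answer_untouchedLegs_subset hm h𝒞 (by omega)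
    exact (Set.ncard_le_ncard (hsub _ (hnext 𝒮 h𝒮 hne))).trans (ih 𝒮 h𝒮 hne)

end LowerBound

/-- for a generalized star (spider) graph with `k ≥ 2` nontrivial legs,
`Z_q(H) = k - 1` for every `q ≥ 1`. -/
theorem stmt16 (k : ℕ) (hk : 2 ≤ k) (m : Fin k → ℕ) (hm : ∀ i, 1 ≤ m i)
    (q : ℕ) (hq : 1 ≤ q) :
    qZeroForcingNumber (spider m) q = k - 1 := by
  refine IsLeast.csInf_eq ⟨?_, fun t ht => ?_⟩
  · have hwin := ZqWinFrom.of_isZeroForcingSet (q := q) (Set.toFinite _)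
      (isZeroForcingSet_spiderLeaves (m := m) (i₀ := ⟨0, by omega⟩) (i₁ := ⟨1, by omega⟩)
        (Fin.ne_of_val_ne one_ne_zero))
    rwa [ncard_spiderLeaves hm] at hwin
  · have hlower := ncard_untouchedLegs_le_of_zqWinFrom hm hq ht
    rw [untouchedLegs_empty, Set.ncard_univ, Nat.card_eq_fintype_card, Fintype.card_fin]
      at hlower
    exact Nat.sub_le_of_le_add hlower

end ZqForcing
end
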